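/- For every η ∈ (0, 1) there exists a constant C > 0 such that for all real numbers r, r' > 0 and all unit vectors σ, σ' ∈ ℝ³ with σ ≠ σ', | 1/‖σ − σ'‖ − 1/‖rσ − r'σ'‖ | ≤ C (min(|r − 1|, 1)^η + min(|r' − 1|, 1)^η) (1 + 1/max(r, r')) / ‖σ − σ'‖^{1+η}. -/

import Mathlib

/-!
Write `a = ‖σ - σ'‖` and `b = ‖r • σ - r' • σ'‖`. The triangle inequality gives
`max r r' * a ≤ 2 * b` and `|b - a| ≤ |r - 1| + |r' - 1|`. The first yields the elementary bound
`|1/a - 1/b| ≤ 1/a + 1/b ≤ 2 (1 + 1/max r r') / a`; together with `1/a - 1/b = (b - a)/(a b)`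
both yield the endpoint bound with `a ^ 2` in the denominator. The endpoint bound is only needed
when the truncations `min |r - 1| 1`, `min |r' - 1| 1` are inactive, since otherwise `a ≤ 2`
lets the elementary bound absorb the extra factor. Hence `|δ| ≤ 2 (1 + 1/max r r') / a * min 1 s`
with `s = 2 (min |r - 1| 1 + min |r' - 1| 1) / a`, and `min 1 s ≤ s ^ η` together with the
subadditivity of `x ↦ x ^ η` interpolates.
-/

noncomputable section

/-- The ambient Euclidean space `ℝ³`. -/
abbrev E3 : Type := EuclideanSpace ℝ (Fin 3)

open Real

lemma min_one_le_rpow {s η : ℝ} (hs : 0 ≤ s) (hη0 : 0 ≤ η) (hη1 : η ≤ 1) :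
    min 1 s ≤ s ^ η := by
  rcases le_total s 1 with h | h
  · exact (min_le_right 1 s).trans (self_le_rpow_of_le_one hs h hη1)
  · exact (min_le_left 1 s).trans (one_le_rpow h hη0)

section

variable {V : Type*} [NormedAddCommGroup V] [NormedSpace ℝ V] {σ σ' : V} {r r' : ℝ}

/-- The quantity `δ(r, r', σ, σ')`. -/
def kernelDiff (r r' : ℝ) (σ σ' : V) : ℝ := 1 / ‖σ - σ'‖ - 1 / ‖r • σ - r' • σ'‖

lemma norm_smul_of_norm_eq_one (hσ : ‖σ‖ = 1) (hr : 0 ≤ r) : ‖r • σ‖ = r := by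
  rw [norm_smul, hσ, mul_one, Real.norm_of_nonneg hr]

lemma abs_sub_le_norm_smul_sub_smul (hσ : ‖σ‖ = 1) (hσ' : ‖σ'‖ = 1) (hr : 0 ≤ r)
    (hr' : 0 ≤ r') : |r - r'| ≤ ‖r • σ - r' • σ'‖ := by
  simpa only [norm_smul_of_norm_eq_one hσ hr, norm_smul_of_norm_eq_one hσ' hr'] using
    abs_norm_sub_norm_le (r • σ) (r' • σ')

/-- Going from `max r r' • σ` to `max r r' • σ'` through `r • σ` and `r' • σ'` costs
`|r - r'|` radially, and `|r - r'|` is itself at most `‖r • σ - r' • σ'‖`. -/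
lemma max_mul_norm_sub_le (hσ : ‖σ‖ = 1) (hσ' : ‖σ'‖ = 1) (hr : 0 ≤ r) (hr' : 0 ≤ r') :
    max r r' * ‖σ - σ'‖ ≤ 2 * ‖r • σ - r' • σ'‖ := by
  set M := max r r' with hM_def
  have hM : 0 ≤ M := hr.trans (le_max_left r r')
  have hsplit : M • σ - M • σ' = (M - r) • σ + (r • σ - r' • σ') - (M - r') • σ' := by
    simp only [sub_smul]; abel
  have hradial : (M - r) + (M - r') = |r - r'| := by
    rcases le_total r r' with h | h
    · rw [hM_def, max_eq_right h, abs_of_nonpos (by linarith)]; ring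
    · rw [hM_def, max_eq_left h, abs_of_nonneg (by linarith)]; ring
  calc M * ‖σ - σ'‖ = ‖M • σ - M • σ'‖ := by
        rw [← smul_sub, norm_smul, Real.norm_of_nonneg hM]
    _ ≤ (M - r) + ‖r • σ - r' • σ'‖ + (M - r') := by
        rw [hsplit]
        refine (norm_sub_le _ _).trans (add_le_add ((norm_add_le _ _).trans ?_) ?_)
        · rw [norm_smul_of_norm_eq_one hσ (sub_nonneg.2 (le_max_left r r'))]
        · rw [norm_smul_of_norm_eq_one hσ' (sub_nonneg.2 (le_max_right r r'))]
    _ ≤ 2 * ‖r • σ - r' • σ'‖ := by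
        linarith [abs_sub_le_norm_smul_sub_smul hσ hσ' hr hr']

lemma abs_norm_smul_sub_smul_sub_norm_sub_le (hσ : ‖σ‖ = 1) (hσ' : ‖σ'‖ = 1) :
    |‖r • σ - r' • σ'‖ - ‖σ - σ'‖| ≤ |r - 1| + |r' - 1| := by
  have h : r • σ - r' • σ' - (σ - σ') = (r - 1) • σ - (r' - 1) • σ' := by
    simp only [sub_smul, one_smul]; abel
  calc |‖r • σ - r' • σ'‖ - ‖σ - σ'‖| ≤ ‖(r - 1) • σ - (r' - 1) • σ'‖ := by
        rw [← h]; exact abs_norm_sub_norm_le _ _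
    _ ≤ |r - 1| + |r' - 1| := by
        refine (norm_sub_le _ _).trans_eq ?_
        rw [norm_smul, norm_smul, hσ, hσ', mul_one, mul_one, Real.norm_eq_abs,
          Real.norm_eq_abs]

lemma norm_smul_sub_smul_pos (hσ : ‖σ‖ = 1) (hσ' : ‖σ'‖ = 1) (hr : 0 < r) (hr' : 0 < r')
    (hne : σ ≠ σ') :
    0 < ‖r • σ - r' • σ'‖ := by
  have : 0 < max r r' * ‖σ - σ'‖ :=
    mul_pos (lt_max_of_lt_left hr) (norm_sub_pos_iff.2 hne)
  linarith [max_mul_norm_sub_le hσ hσ' hr.le hr'.le]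

lemma one_div_norm_smul_sub_smul_le (hσ : ‖σ‖ = 1) (hσ' : ‖σ'‖ = 1) (hr : 0 < r) (hr' : 0 < r')
    (hne : σ ≠ σ') :
    1 / ‖r • σ - r' • σ'‖ ≤ 2 / (max r r' * ‖σ - σ'‖) := by
  rw [div_le_div_iff₀ (norm_smul_sub_smul_pos hσ hσ' hr hr' hne)
    (mul_pos (lt_max_of_lt_left hr) (norm_sub_pos_iff.2 hne))]
  linarith [max_mul_norm_sub_le hσ hσ' hr.le hr'.le]

lemma abs_kernelDiff_le (hσ : ‖σ‖ = 1) (hσ' : ‖σ'‖ = 1) (hr : 0 < r) (hr' : 0 < r')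
    (hne : σ ≠ σ') :
    |kernelDiff r r' σ σ'| ≤ 2 * (1 + 1 / max r r') / ‖σ - σ'‖ := by
  have ha : 0 < ‖σ - σ'‖ := norm_sub_pos_iff.2 hne
  have hb := norm_smul_sub_smul_pos hσ hσ' hr hr' hne
  calc |kernelDiff r r' σ σ'| ≤ 1 / ‖σ - σ'‖ + 1 / ‖r • σ - r' • σ'‖ := by
        refine (abs_sub _ _).trans_eq ?_
        rw [abs_of_pos (one_div_pos.2 ha), abs_of_pos (one_div_pos.2 hb)]
    _ ≤ 1 / ‖σ - σ'‖ + 2 / (max r r' * ‖σ - σ'‖) := by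
        gcongr _ + ?_; exact one_div_norm_smul_sub_smul_le hσ hσ' hr hr' hne
    _ ≤ 2 * (1 + 1 / max r r') / ‖σ - σ'‖ := by
        have hM : 0 < max r r' := lt_max_of_lt_left hr
        rw [div_add_div _ _ ha.ne' (by positivity), div_le_div_iff₀ (by positivity) ha]
        field_simp
        nlinarith

lemma abs_kernelDiff_le_div_sq (hσ : ‖σ‖ = 1) (hσ' : ‖σ'‖ = 1) (hr : 0 < r) (hr' : 0 < r')
    (hne : σ ≠ σ') :
    |kernelDiff r r' σ σ'| ≤ 2 * (|r - 1| + |r' - 1|) / (max r r' * ‖σ - σ'‖ ^ 2) := by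
  have ha : 0 < ‖σ - σ'‖ := norm_sub_pos_iff.2 hne
  have hb := norm_smul_sub_smul_pos hσ hσ' hr hr' hne
  calc |kernelDiff r r' σ σ'|
      = |‖r • σ - r' • σ'‖ - ‖σ - σ'‖| * (1 / ‖σ - σ'‖ * (1 / ‖r • σ - r' • σ'‖)) := by
        rw [kernelDiff, div_sub_div _ _ ha.ne' hb.ne', abs_div, abs_of_pos (mul_pos ha hb)]
        field_simp
    _ ≤ (|r - 1| + |r' - 1|) * (1 / ‖σ - σ'‖ * (2 / (max r r' * ‖σ - σ'‖))) := by
        gcongr ?_ * (_ * ?_)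
        · exact abs_norm_smul_sub_smul_sub_norm_sub_le hσ hσ'
        · exact one_div_norm_smul_sub_smul_le hσ hσ' hr hr' hne
    _ = 2 * (|r - 1| + |r' - 1|) / (max r r' * ‖σ - σ'‖ ^ 2) := by
        field_simp

lemma abs_kernelDiff_le_mul_min (hσ : ‖σ‖ = 1) (hσ' : ‖σ'‖ = 1) (hr : 0 < r) (hr' : 0 < r')
    (hne : σ ≠ σ') :
    |kernelDiff r r' σ σ'| ≤ 2 * (1 + 1 / max r r') / ‖σ - σ'‖ *
      min 1 (2 * (min |r - 1| 1 + min |r' - 1| 1) / ‖σ - σ'‖) := by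
  have ha : 0 < ‖σ - σ'‖ := norm_sub_pos_iff.2 hne
  have hM : 0 < max r r' := lt_max_of_lt_left hr
  rcases le_or_gt 1 (2 * (min |r - 1| 1 + min |r' - 1| 1) / ‖σ - σ'‖) with hs | hs
  · rw [min_eq_left hs, mul_one]
    exact abs_kernelDiff_le hσ hσ' hr hr' hne
  rw [min_eq_right hs.le]
  have ha2 : ‖σ - σ'‖ ≤ 2 := (norm_sub_le σ σ').trans_eq (by rw [hσ, hσ']; norm_num)
  have hsum : min |r - 1| 1 + min |r' - 1| 1 < 1 := by
    rw [div_lt_one ha] at hs; linarith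
  have hm : min |r - 1| 1 < 1 := by linarith [le_min (abs_nonneg (r' - 1)) zero_le_one]
  have hm' : min |r' - 1| 1 < 1 := by linarith [le_min (abs_nonneg (r - 1)) zero_le_one]
  rw [min_eq_left ((min_lt_iff.1 hm).resolve_right (lt_irrefl 1)).le,
    min_eq_left ((min_lt_iff.1 hm').resolve_right (lt_irrefl 1)).le]
  calc |kernelDiff r r' σ σ'| ≤ 2 * (|r - 1| + |r' - 1|) / (max r r' * ‖σ - σ'‖ ^ 2) :=
        abs_kernelDiff_le_div_sq hσ hσ' hr hr' hne
    _ ≤ 2 * (1 + 1 / max r r') / ‖σ - σ'‖ * (2 * (|r - 1| + |r' - 1|) / ‖σ - σ'‖) := by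
        rw [div_mul_div_comm, div_le_div_iff₀ (by positivity) (by positivity)]
        field_simp
        nlinarith [mul_nonneg (add_nonneg (abs_nonneg (r - 1)) (abs_nonneg (r' - 1))) hM.le]

lemma abs_kernelDiff_le_rpow {η : ℝ} (hη0 : 0 ≤ η) (hη1 : η ≤ 1) (hσ : ‖σ‖ = 1)
    (hσ' : ‖σ'‖ = 1) (hr : 0 < r) (hr' : 0 < r')
    (hne : σ ≠ σ') :
    |kernelDiff r r' σ σ'| ≤ 4 * ((min |r - 1| 1) ^ η + (min |r' - 1| 1) ^ η) *
      (1 + 1 / max r r') / ‖σ - σ'‖ ^ (1 + η) := by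
  have ha : 0 < ‖σ - σ'‖ := norm_sub_pos_iff.2 hne
  have hM : 0 < max r r' := lt_max_of_lt_left hr
  have hm : 0 ≤ min |r - 1| 1 := le_min (abs_nonneg _) zero_le_one
  have hm' : 0 ≤ min |r' - 1| 1 := le_min (abs_nonneg _) zero_le_one
  calc |kernelDiff r r' σ σ'| ≤ 2 * (1 + 1 / max r r') / ‖σ - σ'‖ *
        min 1 (2 * (min |r - 1| 1 + min |r' - 1| 1) / ‖σ - σ'‖) :=
        abs_kernelDiff_le_mul_min hσ hσ' hr hr' hne
    _ ≤ 2 * (1 + 1 / max r r') / ‖σ - σ'‖ *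
        (2 * (min |r - 1| 1 + min |r' - 1| 1) / ‖σ - σ'‖) ^ η := by
        gcongr
        exact min_one_le_rpow (by positivity) hη0 hη1
    _ = 2 * (1 + 1 / max r r') * (2 ^ η * (min |r - 1| 1 + min |r' - 1| 1) ^ η) /
        (‖σ - σ'‖ * ‖σ - σ'‖ ^ η) := by
        rw [div_rpow (by positivity) ha.le, mul_rpow zero_le_two (by positivity)]
        ring
    _ ≤ 2 * (1 + 1 / max r r') * (2 * ((min |r - 1| 1) ^ η + (min |r' - 1| 1) ^ η)) /
        (‖σ - σ'‖ * ‖σ - σ'‖ ^ η) := by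
        gcongr
        · exact rpow_le_self_of_one_le one_le_two hη1
        · exact rpow_add_le_add_rpow hm hm' hη0 hη1
    _ = 4 * ((min |r - 1| 1) ^ η + (min |r' - 1| 1) ^ η) * (1 + 1 / max r r') /
        ‖σ - σ'‖ ^ (1 + η) := by
        rw [rpow_add ha, rpow_one]
        ring

end

/-- Interpolated bound on the difference between the Coulomb
kernel on the sphere and the Coulomb kernel in `ℝ³`: for every `η ∈ (0,1)`,
`|1/‖σ−σ'‖ − 1/‖rσ−r'σ'‖| ≤
  C (min(|r−1|,1)^η + min(|r'−1|,1)^η)(1 + 1/max(r,r'))/‖σ−σ'‖^{1+η}`. -/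
theorem kernel_difference_bound_interpolated (η : ℝ) (hη0 : 0 < η) (hη1 : η < 1) :
    ∃ C : ℝ, 0 < C ∧ ∀ r r' : ℝ, 0 < r → 0 < r' →
      ∀ σ σ' : E3, ‖σ‖ = 1 → ‖σ'‖ = 1 → σ ≠ σ' →
        |1 / ‖σ - σ'‖ - 1 / ‖r • σ - r' • σ'‖| ≤
          C * ((min |r - 1| 1) ^ η + (min |r' - 1| 1) ^ η) * (1 + 1 / max r r') /
            ‖σ - σ'‖ ^ (1 + η) :=
  ⟨4, four_pos, fun _ _ hr hr' _ _ hσ hσ' hne =>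
    abs_kernelDiff_le_rpow hη0.le hη1.le hσ hσ' hr hr' hne⟩
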